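/- arXiv:2407.15884 — 4 statements merged into one kernel-verified Lean document; each statement's English description precedes it below -/
import Mathlib

section
/- Let 𝓗 = {h₁,…,h₆} be vectors in ℤ³ such that Σ_{i=1}^{6} h_i ⊗ h_i = C·Id for some positive constant C and such that {h_i ⊗ h_i}_{i=1}^{6} forms a basis of the space 𝕊 of symmetric 3×3 real matrices. Then there exists a positive constant 𝓜₀ = 𝓜₀(𝓗) such that for every N ≤ 𝓜₀ there are smooth functions Γ_{h_i} ∈ C^∞(S_N; (0,∞)), i = 1,…,6, defined on the set S_N := {Id − K : K symmetric, |K|_∞ ≤ N}, satisfying Id − K = Σ_{i=1}^{6} Γ_{h_i}²(Id − K) (h_i ⊗ h_i) for every Id − K ∈ S_N. -/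
open Real

noncomputable section

/-- 3×3 real matrices (as nested functions). -/
abbrev M3 := Fin 3 → Fin 3 → ℝ

/-- The identity matrix. -/
def idm : M3 := fun i j => if i = j then 1 else 0

/-- The outer product h ⊗ h of an integer vector with itself (as a real matrix). -/
def outer (h : Fin 3 → ℤ) : M3 := fun i j => (h i : ℝ) * (h j : ℝ)

/-- Symmetric matrices. -/
def SymmM (A : M3) : Prop := ∀ i j, A i j = A j i

/-- The set S_N = {Id − K : K symmetric, |K|_∞ ≤ N}. -/
def SN (N : ℝ) : Set M3 :=
  {A | ∃ K : M3, SymmM K ∧ (∀ i j, |K i j| ≤ N) ∧ A = idm - K}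

/-! Since `{h_k ⊗ h_k}` is a basis of `𝕊`, every symmetric `A` is `∑ L_k(A) h_k ⊗ h_k` for the dual
coordinate functionals `L_k`. The hypothesis `∑ h_k ⊗ h_k = C·Id` says `L_k(Id) = C⁻¹ > 0` for all `k`,
so by continuity all `L_k` stay positive on a small ball around `Id`, which contains `S_N` for
small `N`; there `Γ_k := √L_k` is smooth and positive. -/

section Biorthogonal

variable {K V ι : Type*} [Field K] [AddCommGroup V] [Module K V] [DecidableEq ι] {v : ι → V}

theorem LinearIndependent.exists_biorthogonal (hv : LinearIndependent K v) :
    ∃ L : ι → Module.Dual K V, ∀ i j, L i (v j) = if i = j then 1 else 0 := by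
  let b := Module.Basis.span hv
  choose L hL using fun i => LinearMap.exists_extend (b.coord i)
  refine ⟨L, fun i j => ?_⟩
  have hbj : (b j : V) = v j := congrArg Subtype.val (Module.Basis.span_apply hv j)
  calc L i (v j) = b.coord i (b j) := by
        rw [← hL i, LinearMap.comp_apply, Submodule.subtype_apply, hbj]
    _ = if i = j then 1 else 0 := by
        rw [Module.Basis.coord_apply, Module.Basis.repr_self, Finsupp.single_apply]
        exact if_congr eq_comm rfl rfl

theorem eq_sum_smul_of_biorthogonal [Fintype ι] {L : ι → Module.Dual K V}
    (hL : ∀ i j, L i (v j) = if i = j then 1 else 0) {x : V}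
    (hx : x ∈ Submodule.span K (Set.range v)) :
    x = ∑ k, L k x • v k := by
  obtain ⟨c, rfl⟩ := (Submodule.mem_span_range_iff_exists_fun K).mp hx
  congr! with k
  simp [map_sum, hL]

end Biorthogonal

theorem exists_closedBall_subset_pos_of_continuous {E ι : Type*} [PseudoMetricSpace E] [Finite ι]
    {f : ι → E → ℝ} (hf : ∀ k, Continuous (f k)) {e : E} (he : ∀ k, 0 < f k e) :
    ∃ ε > 0, ∀ x ∈ Metric.closedBall e ε, ∀ k, 0 < f k x :=
  Metric.nhds_basis_closedBall.eventually_iff.mp <|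
    Filter.eventually_all.mpr fun k => continuousAt_const.eventually_lt (hf k).continuousAt (he k)

theorem symmM_idm : SymmM idm := fun i j => by
  simp only [idm, eq_comm]

theorem symmM_of_mem_SN {N : ℝ} {A : M3} (hA : A ∈ SN N) : SymmM A := by
  obtain ⟨K, hK, -, rfl⟩ := hA
  intro i j
  simp only [Pi.sub_apply, symmM_idm i j, hK i j]

theorem SN_subset_closedBall (N : ℝ) : SN N ⊆ Metric.closedBall idm N := by
  rintro _ ⟨K, -, hK, rfl⟩
  rw [Metric.mem_closedBall, dist_eq_norm, sub_sub_cancel_left, norm_neg]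
  exact (pi_norm_le_iff_of_nonempty _).mpr fun i =>
    (pi_norm_le_iff_of_nonempty _).mpr fun j => hK i j

/-- **Geometric Lemma I.** If `𝓗 = {h₁,…,h₆} ⊂ ℤ³` satisfies
`Σ h_i ⊗ h_i = C·Id` for some `C > 0` and `{h_i ⊗ h_i}` is a basis of the symmetric
3×3 matrices, then there is `𝓜₀ > 0` such that for every `0 < N ≤ 𝓜₀` there are smooth
positive functions `Γ_{h_i}` on `S_N` with `Id − K = Σ Γ_{h_i}(Id−K)² h_i ⊗ h_i` on `S_N`. -/
theorem geometric_lemma_I (h : Fin 6 → Fin 3 → ℤ) (C : ℝ) (hC : 0 < C)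
    (hid : ∀ i j : Fin 3, (∑ k : Fin 6, outer (h k) i j) = C * idm i j)
    (hindep : LinearIndependent ℝ fun k : Fin 6 => outer (h k))
    (hspan : ∀ A : M3, SymmM A →
      A ∈ Submodule.span ℝ (Set.range fun k : Fin 6 => outer (h k))) :
    ∃ M0 : ℝ, 0 < M0 ∧ ∀ N : ℝ, 0 < N → N ≤ M0 →
      ∃ Γ : Fin 6 → M3 → ℝ,
        (∀ k, ∀ n : ℕ, ContDiffOn ℝ n (Γ k) (SN N)) ∧
        (∀ k, ∀ A ∈ SN N, 0 < Γ k A) ∧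
        (∀ A ∈ SN N, ∀ i j, A i j = ∑ k : Fin 6, (Γ k A) ^ 2 * outer (h k) i j) := by
  obtain ⟨L₀, hL₀⟩ := hindep.exists_biorthogonal
  let L : Fin 6 → M3 →L[ℝ] ℝ := fun k => LinearMap.toContinuousLinearMap (L₀ k)
  have hL_idm : ∀ k, L k idm = C⁻¹ := by
    have hsum : C • idm = ∑ k, outer (h k) := by
      ext i j
      simp [hid, Finset.sum_apply]
    intro k
    simp [L, eq_inv_smul_iff₀ hC.ne' |>.mpr hsum, map_sum, hL₀]
  obtain ⟨ε, hε, hpos⟩ := exists_closedBall_subset_pos_of_continuous (fun k => (L k).continuous)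
    (e := idm) fun k => by rw [hL_idm]; positivity
  refine ⟨ε, hε, fun N _ hNε => ?_⟩
  have hposN : ∀ A ∈ SN N, ∀ k, 0 < L k A := fun A hA =>
    hpos A (Metric.closedBall_subset_closedBall hNε (SN_subset_closedBall N hA))
  refine ⟨fun k A => √(L k A), fun k n => ?_, fun k A hA => Real.sqrt_pos.mpr (hposN A hA k),
    fun A hA i j => ?_⟩
  · exact (L k).contDiff.contDiffOn.sqrt fun A hA => (hposN A hA k).ne'
  · have hrep := eq_sum_smul_of_biorthogonal hL₀ (hspan A (symmM_of_mem_SN hA))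
    calc A i j = ∑ k, L k A * outer (h k) i j := by
          simpa [L, Finset.sum_apply] using congr_fun₂ hrep i j
      _ = _ := Finset.sum_congr rfl fun k _ => by rw [Real.sq_sqrt (hposN A hA k).le]
end
end

section
/- Suppose {h₁, h₂, h₃} ⊂ ℤ³∖{0} is an orthogonal frame (three pairwise orthogonal nonzero integer vectors) and set h₄ = −(h₁ + h₂ + h₃). Then for every N₀ > 0 there exist affine functions Γ_{h_i} ∈ C^∞(𝓦_{N₀}; [N₀, ∞)), i = 1,…,4, defined on the ball 𝓦_{N₀} := {w ∈ ℝ³ : |w| ≤ N₀}, such that w = Σ_{i=1}^{4} Γ_{h_i}(w) h_i for every w ∈ 𝓦_{N₀}. In particular each Γ_{h_i} takes values ≥ N₀ on 𝓦_{N₀}. -/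
open Real

noncomputable section

abbrev Pt := Fin 3 → ℝ

/-- Euclidean norm on ℝ³. -/
def enorm3 (w : Pt) : ℝ := Real.sqrt (∑ i, (w i) ^ 2)

/-- **Geometric Lemma II.** If `{h₁,h₂,h₃} ⊂ ℤ³∖{0}` is an orthogonal frame
and `h₄ = −(h₁+h₂+h₃)`, then for every `N₀ > 0` there are affine functions
`Γ_{h_i} : 𝓦_{N₀} → [N₀,∞)` with `w = Σ_{i=1}^{4} Γ_{h_i}(w) h_i` on the ball
`𝓦_{N₀} = {w : |w| ≤ N₀}`. -/
theorem geometric_lemma_II (h : Fin 3 → Fin 3 → ℤ)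
    (hnz : ∀ i, h i ≠ 0)
    (horth : ∀ i j, i ≠ j → (∑ m, h i m * h j m) = 0)
    (N0 : ℝ) (hN0 : 0 < N0) :
    ∃ Γ : Fin 4 → Pt → ℝ,
      -- each Γ_k is affine
      (∀ k, ∃ (a : Pt) (c : ℝ), ∀ w, Γ k w = (∑ j, a j * w j) + c) ∧
      -- each Γ_k takes values ≥ N₀ on 𝓦_{N₀}
      (∀ k, ∀ w : Pt, enorm3 w ≤ N0 → N0 ≤ Γ k w) ∧
      -- decomposition w = Σ Γ_{h_i}(w) h_i
      (∀ w : Pt, enorm3 w ≤ N0 → ∀ m,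
        w m = ∑ k : Fin 4,
          Γ k w * (![fun m' => (h 0 m' : ℝ), fun m' => (h 1 m' : ℝ), fun m' => (h 2 m' : ℝ),
            fun m' => -((h 0 m' : ℝ) + (h 1 m' : ℝ) + (h 2 m' : ℝ))] k m)) := by
  classical
  set Q : Fin 3 → ℝ := fun i => ∑ m, ((h i m : ℝ))^2 with hQdef
  have hQ1 : ∀ i, 1 ≤ Q i := by
    intro i
    obtain ⟨m, hm⟩ : ∃ m, h i m ≠ 0 := by
      by_contra hc; push_neg at hc; exact hnz i (funext hc)
    have h1 : (1:ℝ) ≤ ((h i m : ℝ))^2 := by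
      have : (1:ℤ) ≤ (h i m)^2 := by
        rcases lt_or_gt_of_ne hm with h' | h' <;> nlinarith
      exact_mod_cast this
    calc (1:ℝ) ≤ ((h i m : ℝ))^2 := h1
      _ ≤ Q i := Finset.single_le_sum (f := fun j => ((h i j : ℝ))^2)
          (fun j _ => sq_nonneg _) (Finset.mem_univ m)
  have hQpos : ∀ i, 0 < Q i := fun i => lt_of_lt_of_le one_pos (hQ1 i)
  have hQne : ∀ i, Q i ≠ 0 := fun i => (hQpos i).ne'
  set H : Matrix (Fin 3) (Fin 3) ℝ := Matrix.of (fun i m => (h i m : ℝ)) with hHdef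
  have hHHT : H * H.transpose = Matrix.diagonal Q := by
    ext i j
    rw [Matrix.mul_apply, Matrix.diagonal_apply]
    by_cases hij : i = j
    · subst hij; simp [H, Q, Matrix.transpose_apply, sq]
    · rw [if_neg hij]
      have h0 : (∑ m, (h i m : ℝ) * (h j m : ℝ)) = 0 := by
        exact_mod_cast horth i j hij
      simpa [H, Matrix.transpose_apply] using h0
  have key : (H.transpose * Matrix.diagonal (fun i => (Q i)⁻¹)) * H = 1 := by
    rw [mul_eq_one_comm, ← Matrix.mul_assoc, hHHT, Matrix.diagonal_mul_diagonal]
    have : (fun i => Q i * (Q i)⁻¹) = fun _ : Fin 3 => (1:ℝ) := by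
      funext i; exact mul_inv_cancel₀ (hQne i)
    rw [this, Matrix.diagonal_one]
  -- entries of the product matrix
  have keyentry : ∀ m n, (∑ i : Fin 3, (h i m : ℝ) * ((Q i)⁻¹ * (h i n : ℝ)))
      = if m = n then 1 else 0 := by
    intro m n
    have := congrFun (congrFun key m) n
    rw [Matrix.mul_apply] at this
    have h2 : ∀ i, (H.transpose * Matrix.diagonal (fun i => (Q i)⁻¹)) m i * H i n
        = (h i m : ℝ) * ((Q i)⁻¹ * (h i n : ℝ)) := by
      intro i
      rw [Matrix.mul_apply]
      simp [H, Matrix.transpose_apply, Matrix.diagonal_apply, Finset.mul_sum,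
        Finset.sum_ite_eq', mul_comm, mul_assoc, mul_left_comm]
    rw [Finset.sum_congr rfl (fun i _ => h2 i)] at this
    rw [this, Matrix.one_apply]
  -- orthogonal expansion
  have expand : ∀ (w : Pt) (m : Fin 3),
      w m = ∑ i : Fin 3, ((∑ n, (h i n : ℝ) * w n) / Q i) * (h i m : ℝ) := by
    intro w m
    symm
    calc ∑ i : Fin 3, ((∑ n, (h i n : ℝ) * w n) / Q i) * (h i m : ℝ)
        = ∑ i : Fin 3, ∑ n, (h i m : ℝ) * ((Q i)⁻¹ * (h i n : ℝ)) * w n := by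
          apply Finset.sum_congr rfl
          intro i _
          rw [div_eq_mul_inv, Finset.sum_mul, Finset.sum_mul]
          apply Finset.sum_congr rfl
          intro n _
          ring
      _ = ∑ n, ∑ i : Fin 3, (h i m : ℝ) * ((Q i)⁻¹ * (h i n : ℝ)) * w n :=
          Finset.sum_comm
      _ = ∑ n, (∑ i : Fin 3, (h i m : ℝ) * ((Q i)⁻¹ * (h i n : ℝ))) * w n := by
          apply Finset.sum_congr rfl
          intro n _
          rw [Finset.sum_mul]
      _ = ∑ n, (if m = n then (1:ℝ) else 0) * w n := by
          apply Finset.sum_congr rfl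
          intro n _
          rw [keyentry]
      _ = w m := by simp
  -- coefficients
  set c : Fin 3 → Pt → ℝ := fun i w => (∑ n, (h i n : ℝ) * w n) / Q i with hcdef
  -- bound |c i w| ≤ N0 on the ball
  have hbound : ∀ i (w : Pt), enorm3 w ≤ N0 → |c i w| ≤ N0 := by
    intro i w hw
    have hsumsq : (∑ n, (w n)^2) ≤ N0^2 := by
      have h1 : enorm3 w ^ 2 = ∑ n, (w n)^2 := by
        rw [enorm3, Real.sq_sqrt]
        positivity
      have h2 : (0:ℝ) ≤ enorm3 w := Real.sqrt_nonneg _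
      nlinarith
    have hcs : (∑ n, (h i n : ℝ) * w n)^2 ≤ Q i * (∑ n, (w n)^2) :=
      Finset.sum_mul_sq_le_sq_mul_sq Finset.univ (fun n => (h i n : ℝ)) (fun n => w n)
    have hQi := hQ1 i
    have hQp := hQpos i
    have hsq : (∑ n, (h i n : ℝ) * w n)^2 ≤ (N0 * Q i)^2 := by
      nlinarith [mul_le_mul_of_nonneg_left hsumsq hQp.le,
        mul_nonneg (mul_nonneg (sub_nonneg.2 hQi) hQp.le) (sq_nonneg N0)]
    have habs : |∑ n, (h i n : ℝ) * w n| ≤ N0 * Q i := by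
      have := Real.sqrt_le_sqrt hsq
      rwa [Real.sqrt_sq_eq_abs, Real.sqrt_sq (by positivity)] at this
    rw [abs_le] at habs ⊢
    constructor
    · rw [hcdef, le_div_iff₀ hQp]
      nlinarith [habs.1]
    · rw [hcdef, div_le_iff₀ hQp]
      linarith [habs.2]
  refine ⟨![fun w => c 0 w + 2*N0, fun w => c 1 w + 2*N0, fun w => c 2 w + 2*N0,
    fun _ => 2*N0], ?_, ?_, ?_⟩
  · intro k
    have haff : ∀ i : Fin 3, ∀ w : Pt, c i w + 2*N0 = (∑ j, (h i j : ℝ) / Q i * w j) + 2*N0 := by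
      intro i w
      congr 1
      simp only [hcdef]
      rw [Finset.sum_div]
      apply Finset.sum_congr rfl
      intro j _
      ring
    fin_cases k
    · exact ⟨fun j => (h 0 j : ℝ) / Q 0, 2*N0, fun w => haff 0 w⟩
    · exact ⟨fun j => (h 1 j : ℝ) / Q 1, 2*N0, fun w => haff 1 w⟩
    · exact ⟨fun j => (h 2 j : ℝ) / Q 2, 2*N0, fun w => haff 2 w⟩
    · exact ⟨0, 2*N0, fun w => by simp⟩
  · intro k w hw
    fin_cases k
    · have := hbound 0 w hw; rw [abs_le] at this; simp; linarith [this.1]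
    · have := hbound 1 w hw; rw [abs_le] at this; simp; linarith [this.1]
    · have := hbound 2 w hw; rw [abs_le] at this; simp; linarith [this.1]
    · simp; linarith
  · intro w hw m
    have hexp := expand w m
    rw [Fin.sum_univ_four]
    simp only [Matrix.cons_val_zero, Matrix.cons_val_one, Matrix.head_cons,
      Matrix.cons_val_two, Matrix.tail_cons, Matrix.cons_val_three]
    rw [Fin.sum_univ_three] at hexp
    simp only [hcdef] at hexp ⊢
    rw [hexp]
    ring
end
end

section
/- Let v be a smooth vector field on an open subset of ℝ×ℝⁿ, D_t = ∂_t + v·∇, and let D₁,…,D_n be first-order spatial derivative operators (each D_ℓ = ∂_{x_{i_ℓ}} for some coordinate direction i_ℓ). For operators A, B write ad A (B) = [A,B] = A∘B − B∘A. Then for all integers m, n ≥ 0 the operator identity [D_t^m, D_n∘⋯∘D₁] = Σ_{α ∈ ℕ₀ⁿ, 1 ≤ |α| ≤ m} ( m! / (α! (m−|α|)!) ) ( (ad D_t)^{α_n}(D_n) ∘ ⋯ ∘ (ad D_t)^{α_1}(D₁) ) ∘ D_t^{m−|α|} holds when both sides are applied to any smooth function; in particular each factor (ad D_t)^{α_ℓ}(D_ℓ)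 is a differential operator of order at most 1, so the right-hand side is a sum of differential operators of order at most n. -/
noncomputable section

/-- Time-dependent scalar fields on ℝ × ℝⁿ. -/
abbrev TSF (n : ℕ) := ℝ → (Fin n → ℝ) → ℝ

/-- Operators on time-dependent scalar fields. -/
abbrev Opn (n : ℕ) := TSF n → TSF n

/-- Commutator of two operators: [A,B] = A∘B − B∘A. -/
def opComm {n : ℕ} (A B : Opn n) : Opn n :=
  fun f t x => A (B f) t x - B (A f) t x

/-- Iterated adjoint action: (ad A)^k(B). -/
def adPow {n : ℕ} (A : Opn n) : ℕ → Opn n → Opn n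
  | 0, B => B
  | k + 1, B => opComm A (adPow A k B)

/-- The material derivative operator D_t = ∂_t + v·∇ along the vector field v. -/
def Dtv {n : ℕ} (v : ℝ → (Fin n → ℝ) → (Fin n → ℝ)) : Opn n :=
  fun f t x => deriv (fun s => f s x) t + fderiv ℝ (f t) x (v t x)

/-- The spatial derivative operator D = ∂_{x_i}. -/
def Dsp {n : ℕ} (i : Fin n) : Opn n :=
  fun f t x => fderiv ℝ (f t) x (Pi.single i 1)

/-- Ordered composition of a finite family of operators: `compSeq ops = ops(k−1) ∘ ⋯ ∘ ops 0`
(the last operator is applied outermost). -/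
def compSeq {n k : ℕ} (ops : Fin k → Opn n) : Opn n :=
  (List.ofFn ops).foldr (fun o acc => acc ∘ o) id

/-!
Let `S` be the space of smooth fields. On `S`, `D_t` and every `∂_i` act as linear endomorphisms
(derivatives of the space-time field along smooth vector fields), so the identity is one in the
ring `End S`. There, left multiplication by `a` splits as `ad a + (right multiplication by a)`
with commuting summands, and the binomial theorem gives
`a^m b = ∑ᵢ (m choose i) (ad a)^i(b) a^(m-i)`. Moving `a^m` past the factors `b₁, …, b_n` one at a
time multiplies these binomial coefficients into `m!/(α!(m-|α|)!)`; the term `α = 0` is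
`b_n ⋯ b₁ a^m`.
-/

open Finset LieAlgebra
open scoped Nat

attribute [local instance] LieRing.ofAssociativeRing

def boundedSumTuples (k m : ℕ) : Finset (Fin k → ℕ) :=
  (Icc 0 fun _ => m).filter fun α => ∑ ℓ, α ℓ ≤ m

theorem mem_boundedSumTuples {k m : ℕ} {α : Fin k → ℕ} :
    α ∈ boundedSumTuples k m ↔ ∑ ℓ, α ℓ ≤ m := by
  simp only [boundedSumTuples, mem_filter, mem_Icc, and_iff_right_iff_imp]
  exact fun h => ⟨fun _ => Nat.zero_le _,
    fun ℓ => (single_le_sum (fun _ _ => Nat.zero_le _) (mem_univ ℓ)).trans h⟩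

theorem sum_boundedSumTuples_succ {M : Type*} [AddCommMonoid M] (k m : ℕ)
    (f : (Fin (k + 1) → ℕ) → M) :
    ∑ α ∈ boundedSumTuples (k + 1) m, f α
      = ∑ β ∈ boundedSumTuples k m, ∑ i ∈ range (m - ∑ ℓ, β ℓ + 1), f (Fin.cons i β) := by
  rw [sum_sigma']
  refine (sum_nbij' (fun p => Fin.cons p.2 p.1) (fun α => ⟨Fin.tail α, α 0⟩)
    ?_ ?_ ?_ ?_ ?_).symm
  · rintro ⟨β, i⟩ h
    simp only [mem_sigma, mem_boundedSumTuples, mem_range, Fin.sum_cons] at h ⊢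
    omega
  · intro α h
    simp only [mem_sigma, mem_boundedSumTuples, mem_range, Fin.sum_univ_succ] at h ⊢
    simp only [Fin.tail]
    omega
  · intro p _; simp
  · intro α _; simp
  · intro p _; rfl

theorem List.prod_reverse_ofFn_succ {M : Type*} [Monoid M] {k : ℕ} (b : Fin (k + 1) → M) :
    (List.ofFn b).reverse.prod = (List.ofFn fun ℓ => b ℓ.succ).reverse.prod * b 0 := by
  rw [List.ofFn_succ, List.reverse_cons, List.prod_append, List.prod_singleton]

section Multinomial

variable (K : Type*) [Field K]

def multinomialCoeff {k : ℕ} (m : ℕ) (α : Fin k → ℕ) : K :=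
  (m ! : K) / (((∏ ℓ, (α ℓ)! : ℕ) : K) * ((m - ∑ ℓ, α ℓ)! : ℕ))

variable [CharZero K]

theorem multinomialCoeff_zero {k : ℕ} (m : ℕ) : multinomialCoeff K m (0 : Fin k → ℕ) = 1 := by
  simp [multinomialCoeff, Nat.factorial_ne_zero]

theorem multinomialCoeff_cons {k m i : ℕ} {β : Fin k → ℕ} (h : i + ∑ ℓ, β ℓ ≤ m) :
    multinomialCoeff K m (Fin.cons i β : Fin (k + 1) → ℕ)
      = multinomialCoeff K m β * (m - ∑ ℓ, β ℓ).choose i := by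
  have hsub : m - (i + ∑ ℓ, β ℓ) = m - ∑ ℓ, β ℓ - i := by omega
  rw [multinomialCoeff, multinomialCoeff, Fin.prod_univ_succ, Fin.sum_cons, hsub,
    Nat.cast_choose K (by omega : i ≤ m - ∑ ℓ, β ℓ)]
  simp only [Fin.cons_zero, Fin.cons_succ]
  have : ((m - ∑ ℓ, β ℓ)! : K) ≠ 0 := Nat.cast_ne_zero.mpr (Nat.factorial_ne_zero _)
  push_cast
  field_simp

end Multinomial

section Binomial

variable {K A : Type*} [CommRing K] [Ring A] [Algebra K A]

theorem pow_mul_eq_sum_ad (a b : A) (m : ℕ) :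
    a ^ m * b = ∑ i ∈ range (m + 1), m.choose i • ((ad K A a ^ i) b * a ^ (m - i)) := by
  have had : ad K A a = LinearMap.mulLeft K a - LinearMap.mulRight K a := by
    rw [ad_eq_lmul_left_sub_lmul_right]; rfl
  have hcomm : Commute (ad K A a) (LinearMap.mulRight K a) := by
    rw [had]
    exact (LinearMap.commute_mulLeft_right a a).sub_left (Commute.refl _)
  calc a ^ m * b = ((ad K A a + LinearMap.mulRight K a) ^ m) b := by
        rw [had, sub_add_cancel, LinearMap.pow_mulLeft]; rfl
    _ = _ := by
      rw [hcomm.add_pow, LinearMap.sum_apply]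
      refine sum_congr rfl fun i _ => ?_
      rw [(hcomm.pow_pow i (m - i)).eq, Module.End.mul_apply, Module.End.natCast_apply,
        Module.End.mul_apply, LinearMap.pow_mulRight, LinearMap.mulRight_apply, map_nsmul,
        smul_mul_assoc]

end Binomial

section Komatsu

variable {K A : Type*} [Field K] [CharZero K] [Ring A] [Algebra K A]

theorem pow_mul_prod_eq_sum_ad (a : A) {k : ℕ} (b : Fin k → A) (m : ℕ) :
    a ^ m * (List.ofFn b).reverse.prod
      = ∑ α ∈ boundedSumTuples k m, multinomialCoeff K m α •
          ((List.ofFn fun ℓ => (ad K A a ^ α ℓ) (b ℓ)).reverse.prod * a ^ (m - ∑ ℓ, α ℓ)) := by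
  induction k with
  | zero =>
    have h0 : boundedSumTuples 0 m = {0} := by
      ext α; simp [mem_boundedSumTuples, Subsingleton.elim α 0]
    rw [h0, sum_singleton, multinomialCoeff_zero, one_smul]
    simp
  | succ k ih =>
    rw [List.prod_reverse_ofFn_succ, ← mul_assoc, ih, sum_mul, sum_boundedSumTuples_succ]
    refine sum_congr rfl fun β hβ => ?_
    rw [smul_mul_assoc, mul_assoc, pow_mul_eq_sum_ad (K := K), mul_sum, smul_sum]
    refine sum_congr rfl fun i hi => ?_
    have hle : i + ∑ ℓ, β ℓ ≤ m := by
      rw [mem_boundedSumTuples] at hβ; rw [mem_range] at hi; omega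
    rw [multinomialCoeff_cons K hle, List.prod_reverse_ofFn_succ, Fin.sum_cons, Fin.cons_zero,
      Nat.sub_sub, add_comm (∑ ℓ, β ℓ) i, ← Nat.cast_smul_eq_nsmul K, mul_smul_comm, smul_smul,
      ← mul_assoc]
    simp only [Fin.cons_succ]

theorem pow_mul_prod_sub_prod_mul_pow_eq_sum_ad (a : A) {k : ℕ} (b : Fin k → A) (m : ℕ) :
    a ^ m * (List.ofFn b).reverse.prod - (List.ofFn b).reverse.prod * a ^ m
      = ∑ α ∈ (Icc 0 fun _ => m).filter (fun α => 1 ≤ ∑ ℓ, α ℓ ∧ ∑ ℓ, α ℓ ≤ m),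
          multinomialCoeff K m α •
            ((List.ofFn fun ℓ => (ad K A a ^ α ℓ) (b ℓ)).reverse.prod * a ^ (m - ∑ ℓ, α ℓ)) := by
  have hzero : (0 : Fin k → ℕ) ∈ boundedSumTuples k m := by simp [mem_boundedSumTuples]
  have herase : (boundedSumTuples k m).erase 0
      = (Icc 0 fun _ => m).filter (fun α => 1 ≤ ∑ ℓ, α ℓ ∧ ∑ ℓ, α ℓ ≤ m) := by
    ext α
    simp only [boundedSumTuples, mem_erase, ne_eq, funext_iff, Pi.zero_apply, not_forall,
      mem_filter, mem_Icc, zero_le, true_and, Nat.one_le_iff_ne_zero, sum_eq_zero_iff, mem_univ,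
      forall_const]
    tauto
  rw [pow_mul_prod_eq_sum_ad (K := K), ← add_sum_erase _ _ hzero, herase, multinomialCoeff_zero,
    one_smul]
  simp

end Komatsu

open Function
open scoped ContDiff

variable {n : ℕ}

def smoothFields (n : ℕ) : Submodule ℝ (TSF n) where
  carrier := {F | ContDiff ℝ ∞ (uncurry F)}
  add_mem' {f _} hf hg := (show ContDiff ℝ ∞ (uncurry f) from hf).add hg
  zero_mem' := (contDiff_const : ContDiff ℝ ∞ fun _ => (0 : ℝ))
  smul_mem' c f hf := (show ContDiff ℝ ∞ (uncurry f) from hf).const_smul c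

theorem differentiable_of_mem_smoothFields {F : TSF n} (hF : F ∈ smoothFields n) :
    Differentiable ℝ (uncurry F) :=
  (show ContDiff ℝ ∞ (uncurry F) from hF).differentiable (by simp)

def derivAlong (W : ℝ → (Fin n → ℝ) → ℝ × (Fin n → ℝ)) : Opn n :=
  fun F t x => fderiv ℝ (uncurry F) (t, x) (W t x)

section derivAlong

variable {W : ℝ → (Fin n → ℝ) → ℝ × (Fin n → ℝ)}

theorem derivAlong_mem_smoothFields (hW : ContDiff ℝ ∞ (uncurry W)) {F : TSF n}
    (hF : F ∈ smoothFields n) : derivAlong W F ∈ smoothFields n :=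
  show ContDiff ℝ ∞ fun p => fderiv ℝ (uncurry F) p (uncurry W p) from
    ((show ContDiff ℝ ∞ (uncurry F) from hF).fderiv_right le_rfl).clm_apply hW

theorem derivAlong_add {f g : TSF n} (hf : Differentiable ℝ (uncurry f))
    (hg : Differentiable ℝ (uncurry g)) :
    derivAlong W (f + g) = derivAlong W f + derivAlong W g := by
  funext t x
  change fderiv ℝ (uncurry f + uncurry g) (t, x) (W t x) = _
  rw [fderiv_add (hf _) (hg _)]
  rfl

theorem derivAlong_smul (c : ℝ) {f : TSF n} (hf : Differentiable ℝ (uncurry f)) :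
    derivAlong W (c • f) = c • derivAlong W f := by
  funext t x
  change fderiv ℝ (c • uncurry f) (t, x) (W t x) = _
  rw [fderiv_const_smul (hf _) c]
  rfl

def derivAlongEnd (W : ℝ → (Fin n → ℝ) → ℝ × (Fin n → ℝ)) (hW : ContDiff ℝ ∞ (uncurry W)) :
    Module.End ℝ (smoothFields n) where
  toFun F := ⟨derivAlong W F, derivAlong_mem_smoothFields hW F.2⟩
  map_add' F G := Subtype.ext <|
    derivAlong_add (differentiable_of_mem_smoothFields F.2) (differentiable_of_mem_smoothFields G.2)
  map_smul' c F := Subtype.ext <| derivAlong_smul c (differentiable_of_mem_smoothFields F.2)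

end derivAlong

theorem deriv_apply_eq_fderiv_uncurry {F : TSF n} (hF : Differentiable ℝ (uncurry F)) (t : ℝ)
    (x : Fin n → ℝ) : deriv (fun s => F s x) t = fderiv ℝ (uncurry F) (t, x) (1, 0) := by
  have h : HasFDerivAt (fun s => F s x)
      ((fderiv ℝ (uncurry F) (t, x)).comp (.inl ℝ ℝ (Fin n → ℝ))) t :=
    (hF (t, x)).hasFDerivAt.comp (f := fun s => (s, x)) t (hasFDerivAt_prodMk_left t x)
  exact h.hasDerivAt.deriv

theorem fderiv_apply_eq_fderiv_uncurry {F : TSF n} (hF : Differentiable ℝ (uncurry F)) (t : ℝ)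
    (x w : Fin n → ℝ) : fderiv ℝ (F t) x w = fderiv ℝ (uncurry F) (t, x) (0, w) := by
  have h : HasFDerivAt (F t)
      ((fderiv ℝ (uncurry F) (t, x)).comp (.inr ℝ ℝ (Fin n → ℝ))) x :=
    (hF (t, x)).hasFDerivAt.comp x (hasFDerivAt_prodMk_right t x)
  rw [h.fderiv]
  rfl

theorem Dtv_eq_derivAlong (v : ℝ → (Fin n → ℝ) → (Fin n → ℝ)) {F : TSF n}
    (hF : Differentiable ℝ (uncurry F)) : Dtv v F = derivAlong (fun t x => (1, v t x)) F := by
  funext t x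
  rw [Dtv, deriv_apply_eq_fderiv_uncurry hF, fderiv_apply_eq_fderiv_uncurry hF, ← map_add,
    Prod.mk_add_mk, add_zero, zero_add]
  rfl

theorem Dsp_eq_derivAlong (i : Fin n) {F : TSF n} (hF : Differentiable ℝ (uncurry F)) :
    Dsp i F = derivAlong (fun _ _ => (0, Pi.single i 1)) F := by
  funext t x
  exact fderiv_apply_eq_fderiv_uncurry hF t x _

theorem compSeq_succ {k : ℕ} (D : Fin (k + 1) → Opn n) :
    compSeq D = compSeq (fun ℓ => D ℓ.succ) ∘ D 0 := by
  rw [compSeq, List.ofFn_succ]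
  rfl

def IsRestrictionOf {S : Submodule ℝ (TSF n)} (L : Module.End ℝ S) (D : Opn n) : Prop :=
  ∀ f : S, (L f : TSF n) = D f

namespace IsRestrictionOf

variable {S : Submodule ℝ (TSF n)} {L M : Module.End ℝ S} {D E : Opn n}

theorem mul (hL : IsRestrictionOf L D) (hM : IsRestrictionOf M E) :
    IsRestrictionOf (L * M) (D ∘ E) := fun f => by
  rw [Module.End.mul_apply, hL, hM, comp_apply]

theorem pow (hL : IsRestrictionOf L D) (m : ℕ) : IsRestrictionOf (L ^ m) D^[m] := by
  induction m with
  | zero => exact fun _ => rfl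
  | succ m ih => rw [pow_succ', iterate_succ']; exact hL.mul ih

theorem lie (hL : IsRestrictionOf L D) (hM : IsRestrictionOf M E) :
    IsRestrictionOf (ad ℝ _ L M) (opComm D E) := fun f => by
  rw [ad_apply, Ring.lie_def, LinearMap.sub_apply, Submodule.coe_sub, (hL.mul hM) f,
    (hM.mul hL) f]
  rfl

theorem adPow (hL : IsRestrictionOf L D) (hM : IsRestrictionOf M E) (k : ℕ) :
    IsRestrictionOf ((ad ℝ _ L ^ k) M) (adPow D k E) := by
  induction k with
  | zero => exact hM
  | succ k ih => rw [pow_succ', Module.End.mul_apply]; exact hL.lie ih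

theorem listProd {k : ℕ} {L : Fin k → Module.End ℝ S} {D : Fin k → Opn n}
    (h : ∀ ℓ, IsRestrictionOf (L ℓ) (D ℓ)) :
    IsRestrictionOf (List.ofFn L).reverse.prod (compSeq D) := by
  induction k with
  | zero => exact fun _ => rfl
  | succ k ih =>
    rw [List.prod_reverse_ofFn_succ, compSeq_succ]
    exact (ih fun ℓ => h ℓ.succ).mul (h 0)

end IsRestrictionOf

/-- **commutator of material and spatial derivatives, Komatsu-type identity.**
For first-order spatial derivatives `D₁,…,D_n` (here `Dsp (dir 0), …, Dsp (dir (nn−1))`) and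
the material derivative `D_t = ∂_t + v·∇`, the operator identity
`[D_t^m, D_n∘⋯∘D₁] = Σ_{α ∈ ℕ₀ⁿ, 1 ≤ |α| ≤ m} (m!/(α!(m−|α|)!))
  ((ad D_t)^{α_n}(D_n) ∘ ⋯ ∘ (ad D_t)^{α_1}(D₁)) ∘ D_t^{m−|α|}`
holds applied to any smooth function. -/
theorem material_spatial_commutator_identity
    (n : ℕ) (v : ℝ → (Fin n → ℝ) → (Fin n → ℝ))
    (hv : ∀ N : ℕ, ContDiff ℝ N (Function.uncurry v))
    (m nn : ℕ) (dir : Fin nn → Fin n)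
    (F : TSF n) (hF : ∀ N : ℕ, ContDiff ℝ N (Function.uncurry F))
    (t : ℝ) (x : Fin n → ℝ) :
    ((Dtv v)^[m] (compSeq (fun ℓ => Dsp (dir ℓ)) F)) t x
      - (compSeq (fun ℓ => Dsp (dir ℓ)) ((Dtv v)^[m] F)) t x
    = ∑ α ∈ (Finset.Icc (0 : Fin nn → ℕ) fun _ => m).filter
          (fun α => 1 ≤ ∑ ℓ, α ℓ ∧ ∑ ℓ, α ℓ ≤ m),
        ((m.factorial : ℝ)
            / (((∏ ℓ, (α ℓ).factorial : ℕ) : ℝ) * ((m - ∑ ℓ, α ℓ).factorial : ℕ)))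
          * (compSeq (fun ℓ => adPow (Dtv v) (α ℓ) (Dsp (dir ℓ)))
              ((Dtv v)^[m - ∑ ℓ, α ℓ] F)) t x := by
  let Dt := derivAlongEnd (fun t x => (1, v t x)) (contDiff_const.prodMk (contDiff_infty.2 hv))
  let Ds ℓ := derivAlongEnd (fun _ _ => (0, Pi.single (dir ℓ) 1)) contDiff_const
  have hDt : IsRestrictionOf Dt (Dtv v) := fun f =>
    (Dtv_eq_derivAlong v (differentiable_of_mem_smoothFields f.2)).symm
  have hDs ℓ : IsRestrictionOf (Ds ℓ) (Dsp (dir ℓ)) := fun f =>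
    (Dsp_eq_derivAlong (dir ℓ) (differentiable_of_mem_smoothFields f.2)).symm
  have hring := congrArg
    (fun L : Module.End ℝ (smoothFields n) => (L ⟨F, contDiff_infty.2 hF⟩ : TSF n) t x)
    (pow_mul_prod_sub_prod_mul_pow_eq_sum_ad (K := ℝ) Dt Ds m)
  simp only [LinearMap.sub_apply, Submodule.coe_sub, Pi.sub_apply, LinearMap.sum_apply,
    Submodule.coe_sum, Finset.sum_apply, LinearMap.smul_apply, Submodule.coe_smul, Pi.smul_apply,
    smul_eq_mul] at hring
  rw [(hDt.pow m).mul (.listProd hDs), (IsRestrictionOf.listProd hDs).mul (hDt.pow m)] at hring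
  refine hring.trans (Finset.sum_congr rfl fun α _ => ?_)
  rw [(IsRestrictionOf.listProd fun ℓ => hDt.adPow (hDs ℓ) (α ℓ)).mul (hDt.pow _),
    multinomialCoeff]
  rfl
end
end

section
/- Let ξ : ℝ³ → ℝ³ be a smooth map with everywhere invertible Jacobian ∇ξ and det ∇ξ ≡ 1 (volume preserving), and let U : ℝ³ → ℝ³ be a smooth vector field. Then ∇ × ( (∇ξ)^T (U ∘ ξ) ) = (∇ξ)^{−1} ( (∇ × U) ∘ ξ ) pointwise; that is, the curl of the pulled-back covector field (∇ξ)^T U(ξ) equals the inverse Jacobian applied to the curl of U evaluated along ξ. -/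
noncomputable section

abbrev Vec := Fin 3 → ℝ

/-- Partial derivative in the i-th direction. -/
def pd {E : Type*} [NormedAddCommGroup E] [NormedSpace ℝ E]
    (i : Fin 3) (f : Pt → E) (x : Pt) : E :=
  fderiv ℝ f x (Pi.single i 1)

/-- The Levi-Civita symbol on {0,1,2}: ε_{ijk} = (j−i)(k−j)(k−i)/2. -/
def levi (i j k : Fin 3) : ℝ :=
  (((j : ℕ) : ℝ) - ((i : ℕ) : ℝ)) * (((k : ℕ) : ℝ) - ((j : ℕ) : ℝ))
    * (((k : ℕ) : ℝ) - ((i : ℕ) : ℝ)) / 2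

/-- The curl of a vector field, (∇×W)_i = ε_{ijk} ∂_j W_k. -/
def curl (W : Pt → Vec) (x : Pt) : Vec :=
  fun i => ∑ j, ∑ k, levi i j k * pd j (fun y => W y k) x

/-- The Jacobian matrix of ξ, with entries (∇ξ)_{ij} = ∂_j ξ_i. -/
def jac (ξ : Pt → Pt) (x : Pt) : Matrix (Fin 3) (Fin 3) ℝ :=
  Matrix.of fun i j => pd j (fun y => ξ y i) x

/-!
Differentiating `∂_k ξ_m · U_m(ξ)` in `x_j` gives a Hessian term `∂_j ∂_k ξ_m · U_m(ξ)`,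
symmetric in `(j, k)` and hence killed by `ε_{ijk}`, plus `A_{mk} A_{nj} (∂_n U_m)(ξ)` with
`A = ∇ξ`.
Contracting the latter with `ε_{ijk}` is the cofactor identity
`ε_{ijk} A_{nj} A_{mk} = adj(A)_{il} ε_{lnm}`, and `adj A = A⁻¹` because `det A = 1`.
-/

open Finset

lemma levi_swap (i j k : Fin 3) : levi i k j = -levi i j k := by
  simp only [levi]; ring

lemma sum_levi_mul_eq_zero_of_symm {s : Fin 3 → Fin 3 → ℝ} (hs : ∀ j k, s j k = s k j)
    (i : Fin 3) : ∑ j, ∑ k, levi i j k * s j k = 0 := by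
  have h : ∑ j, ∑ k, levi i j k * s j k = -∑ j, ∑ k, levi i j k * s j k := by
    conv_lhs => rw [sum_comm]
    simp only [← sum_neg_distrib]
    exact sum_congr rfl fun j _ => sum_congr rfl fun k _ => by
      rw [levi_swap, hs]; ring
  linarith

lemma sum_levi_mul_mul_eq_adjugate (A : Matrix (Fin 3) (Fin 3) ℝ) (i n m : Fin 3) :
    ∑ j, ∑ k, levi i j k * A n j * A m k = ∑ l, A.adjugate i l * levi l n m := by
  rw [Matrix.adjugate_fin_three]
  fin_cases i <;> fin_cases n <;> fin_cases m <;>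
    simp [Fin.sum_univ_three, levi] <;> ring

lemma sum_levi_symm_add_mul_mul_eq_adjugate (A : Matrix (Fin 3) (Fin 3) ℝ)
    {s : Fin 3 → Fin 3 → Fin 3 → ℝ} (hs : ∀ j k m, s j k m = s k j m)
    (u : Fin 3 → ℝ) (d : Fin 3 → Fin 3 → ℝ) (i : Fin 3) :
    ∑ j, ∑ k, levi i j k * ∑ m, (s j k m * u m + A m k * ∑ n, A n j * d n m)
      = ∑ l, A.adjugate i l * ∑ n, ∑ m, levi l n m * d n m := by
  calc _ = ∑ m, u m * ∑ j, ∑ k, levi i j k * s j k m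
          + ∑ n, ∑ m, d n m * ∑ j, ∑ k, levi i j k * A n j * A m k := by
        simp only [Fin.sum_univ_three]; ring
    _ = ∑ n, ∑ m, d n m * ∑ l, A.adjugate i l * levi l n m := by
        simp only [sum_levi_mul_eq_zero_of_symm (hs · · _), sum_levi_mul_mul_eq_adjugate,
          mul_zero, sum_const_zero, zero_add]
    _ = _ := by simp only [Fin.sum_univ_three]; ring

section PartialDerivatives

variable {E F : Type*} [NormedAddCommGroup E] [NormedSpace ℝ E]
  [NormedAddCommGroup F] [NormedSpace ℝ F]

lemma pd_clm_comp (L : E →L[ℝ] F) {f : Pt → E} {x : Pt} (hf : DifferentiableAt ℝ f x)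
    (j : Fin 3) : pd j (fun y => L (f y)) x = L (pd j f x) := by
  rw [pd, fderiv_fun_comp x L.differentiableAt hf, L.fderiv]
  rfl

lemma pd_apply {f : Pt → Vec} {x : Pt} (hf : DifferentiableAt ℝ f x) (j m : Fin 3) :
    pd j (fun y => f y m) x = pd j f x m :=
  pd_clm_comp (ContinuousLinearMap.proj m) hf j

lemma jac_apply {ξ : Pt → Pt} {x : Pt} (hξ : DifferentiableAt ℝ ξ x) (i j : Fin 3) :
    jac ξ x i j = pd j ξ x i :=
  pd_apply hξ j i

lemma pd_sum {g : Fin 3 → Pt → ℝ} {x : Pt} (hg : ∀ m, DifferentiableAt ℝ (g m) x)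
    (j : Fin 3) : pd j (fun y => ∑ m, g m y) x = ∑ m, pd j (g m) x := by
  rw [pd, (HasFDerivAt.fun_sum fun m _ => (hg m).hasFDerivAt).fderiv]
  simp [pd]

lemma pd_mul {g h : Pt → ℝ} {x : Pt} (hg : DifferentiableAt ℝ g x)
    (hh : DifferentiableAt ℝ h x) (j : Fin 3) :
    pd j (fun y => g y * h y) x = pd j g x * h x + g x * pd j h x := by
  rw [pd, fderiv_fun_mul hg hh]
  simp only [FunLike.coe_add, FunLike.coe_smul, Pi.add_apply, Pi.smul_apply, smul_eq_mul, pd]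
  ring

lemma pd_comp {ξ : Pt → Pt} {g : Pt → E} {x : Pt} (hg : DifferentiableAt ℝ g (ξ x))
    (hξ : DifferentiableAt ℝ ξ x) (j : Fin 3) :
    pd j (fun y => g (ξ y)) x = ∑ n, pd j ξ x n • pd n g (ξ x) := by
  rw [pd, fderiv_fun_comp x hg hξ, ContinuousLinearMap.comp_apply,
    pi_eq_sum_univ' (fderiv ℝ ξ x _), map_sum]
  simp only [map_smul, pd]

lemma differentiableAt_fderiv_of_contDiffAt_two {f : Pt → E} {x : Pt}
    (hf : ContDiffAt ℝ 2 f x) : DifferentiableAt ℝ (fderiv ℝ f) x :=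
  (hf.fderiv_right (m := 1) le_rfl).differentiableAt one_ne_zero

lemma differentiableAt_pd {f : Pt → E} {x : Pt} (hf : ContDiffAt ℝ 2 f x) (k : Fin 3) :
    DifferentiableAt ℝ (pd k f) x :=
  (differentiableAt_fderiv_of_contDiffAt_two hf).clm_apply (differentiableAt_const _)

lemma pd_pd_comm {f : Pt → E} {x : Pt} (hf : ContDiffAt ℝ 2 f x) (j k : Fin 3) :
    pd j (pd k f) x = pd k (pd j f) x := by
  have hdf := differentiableAt_fderiv_of_contDiffAt_two hf
  have hsnd : ∀ a b : Fin 3,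
      pd a (pd b f) x = fderiv ℝ (fderiv ℝ f) x (Pi.single a 1) (Pi.single b 1) := fun a b =>
    pd_clm_comp (ContinuousLinearMap.apply ℝ E (Pi.single b 1)) hdf a
  rw [hsnd, hsnd, hf.isSymmSndFDerivAt (by simp)]

end PartialDerivatives

lemma pd_pullback {ξ : Pt → Pt} {U : Pt → Vec} {x : Pt} (hξ : ContDiffAt ℝ 2 ξ x)
    (hU : DifferentiableAt ℝ U (ξ x)) (j k : Fin 3) :
    pd j (fun y => ∑ m, pd k ξ y m * U (ξ y) m) x
      = ∑ m, (pd j (pd k ξ) x m * U (ξ x) m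
          + jac ξ x m k * ∑ n, jac ξ x n j * pd n (fun z => U z m) (ξ x)) := by
  have hξx : DifferentiableAt ℝ ξ x := hξ.differentiableAt two_ne_zero
  have hUm (m : Fin 3) : DifferentiableAt ℝ (fun z => U z m) (ξ x) := differentiableAt_pi.1 hU m
  have hpd (m : Fin 3) : DifferentiableAt ℝ (fun y => pd k ξ y m) x :=
    differentiableAt_pi.1 (differentiableAt_pd hξ k) m
  have hUξ (m : Fin 3) : DifferentiableAt ℝ (fun y => U (ξ y) m) x := (hUm m).comp x hξx
  rw [pd_sum fun m => (hpd m).fun_mul (hUξ m)]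
  refine sum_congr rfl fun m _ => ?_
  rw [pd_mul (hpd m) (hUξ m), pd_apply (differentiableAt_pd hξ k), pd_comp (hUm m) hξx]
  simp only [jac_apply hξx, smul_eq_mul]

theorem curl_pullback_general (ξ : Pt → Pt) (U : Pt → Vec)
    (hξ : ∀ n : ℕ, ContDiff ℝ n ξ) (hU : ∀ n : ℕ, ContDiff ℝ n U)
    (hdet : ∀ x, (jac ξ x).det = 1) :
    ∀ (x : Pt) (i : Fin 3),
      curl (fun y i' => ∑ mm, pd i' ξ y mm * U (ξ y) mm) x i
        = ∑ mm, (jac ξ x)⁻¹ i mm * curl U (ξ x) mm := by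
  intro x i
  have hinv_eq : (jac ξ x)⁻¹ = (jac ξ x).adjugate := by
    rw [Matrix.inv_def, hdet, Ring.inverse_one, one_smul]
  simp only [curl, hinv_eq, pd_pullback (hξ 2).contDiffAt ((hU 1).differentiable one_ne_zero _)]
  exact sum_levi_symm_add_mul_mul_eq_adjugate _
    (fun j k m => by rw [pd_pd_comm (hξ 2).contDiffAt]) _ _ i

/-- **curl of a pulled-back covector field.** If `ξ : ℝ³ → ℝ³` is smooth,
volume preserving (`det ∇ξ ≡ 1`) with everywhere invertible Jacobian, and `U` is a smooth
vector field, then `∇ × ((∇ξ)ᵀ (U∘ξ)) = (∇ξ)⁻¹ ((∇×U) ∘ ξ)` pointwise. -/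
theorem curl_pullback (ξ : Pt → Pt) (U : Pt → Vec)
    (hξ : ∀ n : ℕ, ContDiff ℝ n ξ) (hU : ∀ n : ℕ, ContDiff ℝ n U)
    (hinv : ∀ x, IsUnit (jac ξ x))
    (hdet : ∀ x, (jac ξ x).det = 1) :
    ∀ (x : Pt) (i : Fin 3),
      curl (fun y i' => ∑ mm, pd i' ξ y mm * U (ξ y) mm) x i
        = ∑ mm, (jac ξ x)⁻¹ i mm * curl U (ξ x) mm :=
  curl_pullback_general ξ U hξ hU hdet
end
end
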